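/- Let F = (f₁,…,f_k) be a k-uple of pairwise commuting holomorphic self-maps of 𝔹^q, let (𝔹^d, h, Φ) be a canonical Kobayashi hyperbolic semi-model for F, and let g be a holomorphic self-map of 𝔹^q commuting with each f_j. Then there exists a unique holomorphic self-map Γ of 𝔹^d such that Γ ∘ h = h ∘ g and Γ ∘ φ_j = φ_j ∘ Γ for all 1 ≤ j ≤ k. -/

import Mathlib

open Set Filter

noncomputable section

/-- `E q` is `ℂ^q` as a Euclidean (Hermitian) space. -/
abbrev E (q : ℕ) : Type := EuclideanSpace ℂ (Fin q)

/-- The open unit ball `𝔹^q ⊂ ℂ^q`. -/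
def B (q : ℕ) : Set (E q) := Metric.ball 0 1

/-- A holomorphic map from `𝔹^q` to `𝔹^d`: it maps the ball into the ball and is
complex differentiable on the ball. -/
def HolMap (q d : ℕ) (f : E q → E d) : Prop :=
  Set.MapsTo f (B q) (B d) ∧ DifferentiableOn ℂ f (B q)

/-- An automorphism of `𝔹^d`: a holomorphic self-map with a holomorphic inverse on the ball. -/
def IsAut (d : ℕ) (τ : E d → E d) : Prop :=
  HolMap d d τ ∧ ∃ σ : E d → E d, HolMap d d σ ∧
    Set.EqOn (σ ∘ τ) id (B d) ∧ Set.EqOn (τ ∘ σ) id (B d)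

/-- `iterT f N = f₁^{n₁} ∘ ⋯ ∘ f_k^{n_k}` for a `k`-uple `f` and a multi-index `N ∈ ℕ^k`. -/
def iterT {α : Type} {k : ℕ} (f : Fin k → α → α) (N : Fin k → ℕ) : α → α :=
  (List.ofFn fun j => (f j)^[N j]).foldr (· ∘ ·) id

/-- Pairwise commutation (on the ball) of a `k`-uple of self-maps. -/
def CommutingOn (q k : ℕ) (f : Fin k → E q → E q) : Prop :=
  ∀ i j, Set.EqOn (f i ∘ f j) (f j ∘ f i) (B q)

/-- A quasi-model with ball base for the `k`-uple `f`. -/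
def IsQuasiModel (q d k : ℕ) (f : Fin k → E q → E q) (ℓ : E q → E d)
    (τ : Fin k → E d → E d) : Prop :=
  HolMap q d ℓ ∧ (∀ j, IsAut d (τ j)) ∧
    (∀ i j, Set.EqOn (τ i ∘ τ j) (τ j ∘ τ i) (B d)) ∧
    (∀ j, Set.EqOn (ℓ ∘ f j) (τ j ∘ ℓ) (B q))

/-- A semi-model with ball base: a quasi-model with `⋃_{N ∈ ℕ^k} T^{-N}(ℓ(𝔹^q)) = 𝔹^d`,
where `T^{-N}(S)` is expressed as `{y ∈ 𝔹^d | T^N y ∈ S}`. -/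
def IsSemiModel (q d k : ℕ) (f : Fin k → E q → E q) (ℓ : E q → E d)
    (τ : Fin k → E d → E d) : Prop :=
  IsQuasiModel q d k f ℓ τ ∧
    (⋃ N : Fin k → ℕ, B d ∩ (iterT τ N) ⁻¹' (ℓ '' B q)) = B d

/-- A canonical Kobayashi hyperbolic semi-model (CSM) with ball base: a semi-model
through which every quasi-model with ball base (necessarily uniquely) factorizes. -/
def IsCSM (q d k : ℕ) (f : Fin k → E q → E q) (ℓ : E q → E d)
    (τ : Fin k → E d → E d) : Prop :=
  IsSemiModel q d k f ℓ τ ∧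
    ∀ (m : ℕ) (h : E q → E m) (φ : Fin k → E m → E m),
      IsQuasiModel q m k f h φ →
      ∃ η : E d → E m, HolMap d m η ∧ Set.EqOn (η ∘ ℓ) h (B q) ∧
        ∀ j, Set.EqOn (η ∘ τ j) (φ j ∘ η) (B d)

/-- Inverse hyperbolic tangent. -/
def arctanh (t : ℝ) : ℝ := Real.log ((1 + t) / (1 - t)) / 2

/-- The Kobayashi distance of the unit ball `𝔹^q`:
`k_{𝔹^q}(z,w) = arctanh √(1 − (1−‖z‖²)(1−‖w‖²)/|1−⟨z,w⟩|²)`. -/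
def kob (q : ℕ) (z w : E q) : ℝ :=
  arctanh (Real.sqrt (1 - ((1 - ‖z‖ ^ 2) * (1 - ‖w‖ ^ 2)) /
    ‖1 - (inner ℂ z w : ℂ)‖ ^ 2))

/-- The Kobayashi ball of center `p` and radius `r` in `𝔹^q`. -/
def Bk (q : ℕ) (p : E q) (r : ℝ) : Set (E q) := {z ∈ B q | kob q z p < r}

/-- `p ∈ ∂𝔹^q` is the Denjoy–Wolff point of `f`: the iterates of `f` converge
locally uniformly on `𝔹^q` to the constant `p`. -/
def IsDW (q : ℕ) (f : E q → E q) (p : E q) : Prop :=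
  ‖p‖ = 1 ∧
    TendstoLocallyUniformlyOn (fun n z => f^[n] z) (fun _ => p) Filter.atTop (B q)

/-- The dilation `λ = liminf_{z→p} (1−‖f(z)‖)/(1−‖z‖)` of `f` at a boundary point `p`. -/
def dilation (q : ℕ) (f : E q → E q) (p : E q) : ℝ :=
  Filter.liminf (fun z => (1 - ‖f z‖) / (1 - ‖z‖)) (nhdsWithin p (B q))

/-- The rank of the complex differential of `f` at `y`. -/
def rankAt (q d : ℕ) (f : E q → E d) (y : E q) : ℕ :=
  Module.finrank ℂ (LinearMap.range (fderiv ℂ f y).toLinearMap)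

/-- A quasi-model with ball base for a single self-map `f`. -/
def IsQuasiModel1 (q d : ℕ) (f : E q → E q) (ℓ : E q → E d) (τ : E d → E d) : Prop :=
  HolMap q d ℓ ∧ IsAut d τ ∧ Set.EqOn (ℓ ∘ f) (τ ∘ ℓ) (B q)

/-- A semi-model with ball base for a single self-map `f`. -/
def IsSemiModel1 (q d : ℕ) (f : E q → E q) (ℓ : E q → E d) (τ : E d → E d) : Prop :=
  IsQuasiModel1 q d f ℓ τ ∧ (⋃ n : ℕ, B d ∩ τ^[n] ⁻¹' (ℓ '' B q)) = B d

/-- A canonical Kobayashi hyperbolic semi-model with ball base for a single self-map `f`. -/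
def IsCSM1 (q d : ℕ) (f : E q → E q) (ℓ : E q → E d) (τ : E d → E d) : Prop :=
  IsSemiModel1 q d f ℓ τ ∧
    ∀ (m : ℕ) (h : E q → E m) (φ : E m → E m), IsQuasiModel1 q m f h φ →
      ∃ η : E d → E m, HolMap d m η ∧ Set.EqOn (η ∘ ℓ) h (B q) ∧
        Set.EqOn (η ∘ τ) (φ ∘ η) (B d)

/-!
Since `g` commutes with every `f_j`, `(𝔹^d, h ∘ g, Φ)` is again a quasi-model for `F`, and the
universal property of the canonical model produces `Γ`. For uniqueness, two such maps agree on
`h(𝔹^q)`; they commute with every `Φ^N`, which is injective on `𝔹^d`, and every point of `𝔹^d`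
is sent into `h(𝔹^q)` by some `Φ^N`.
-/

section Iterates

variable {α : Type} {k : ℕ} {S : Set α} {f : Fin k → α → α}

lemma iterT_mem {M : Set (α → α)} (hid : id ∈ M) (hcomp : ∀ u ∈ M, ∀ v ∈ M, u ∘ v ∈ M)
    (hf : ∀ j, f j ∈ M) (N : Fin k → ℕ) : iterT f N ∈ M := by
  have hiter : ∀ j n, (f j)^[n] ∈ M := fun j n => by
    induction n with
    | zero => exact hid
    | succ n ih => rw [Function.iterate_succ]; exact hcomp _ ih _ (hf j)
  suffices hfold : ∀ L : List (α → α), (∀ u ∈ L, u ∈ M) → L.foldr (· ∘ ·) id ∈ M from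
    hfold _ fun u hu => by obtain ⟨j, rfl⟩ := List.mem_ofFn.mp hu; exact hiter j (N j)
  intro L hL
  induction L with
  | nil => exact hid
  | cons u L ih =>
    exact hcomp u (hL u List.mem_cons_self) _ (ih fun v hv => hL v (List.mem_cons_of_mem u hv))

lemma iterT_mapsTo_injOn (hmaps : ∀ j, MapsTo (f j) S S) (hinj : ∀ j, InjOn (f j) S)
    (N : Fin k → ℕ) : MapsTo (iterT f N) S S ∧ InjOn (iterT f N) S :=
  iterT_mem (M := {u | MapsTo u S S ∧ InjOn u S}) ⟨mapsTo_id S, injOn_id S⟩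
    (fun _ hu _ hv => ⟨hu.1.comp hv.1, hu.2.comp hv.2 hv.1⟩) (fun j => ⟨hmaps j, hinj j⟩) N

lemma iterT_commute {Γ : α → α} (hmaps : ∀ j, MapsTo (f j) S S)
    (hΓ : ∀ j, EqOn (Γ ∘ f j) (f j ∘ Γ) S) (N : Fin k → ℕ) :
    EqOn (Γ ∘ iterT f N) (iterT f N ∘ Γ) S :=
  (iterT_mem (M := {u | MapsTo u S S ∧ EqOn (Γ ∘ u) (u ∘ Γ) S}) ⟨mapsTo_id S, fun _ _ => rfl⟩
    (fun u hu v hv => ⟨hu.1.comp hv.1, fun x hx => by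
      simp only [Function.comp_apply]
      rw [← show Γ (v x) = v (Γ x) from hv.2 hx]
      exact hu.2 (hv.1 hx)⟩)
    (fun j => ⟨hmaps j, hΓ j⟩) N).2

end Iterates

lemma IsAut.injOn {d : ℕ} {τ : E d → E d} (hτ : IsAut d τ) : InjOn τ (B d) := by
  obtain ⟨_, σ, _, hστ, _⟩ := hτ
  exact LeftInvOn.injOn hστ

lemma IsQuasiModel.comp_right {q d k : ℕ} {f : Fin k → E q → E q} {ℓ : E q → E d}
    {τ : Fin k → E d → E d} (hℓ : IsQuasiModel q d k f ℓ τ) {g : E q → E q}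
    (hg : HolMap q q g) (hgf : ∀ j, EqOn (f j ∘ g) (g ∘ f j) (B q)) :
    IsQuasiModel q d k f (ℓ ∘ g) τ := by
  obtain ⟨hℓhol, hτ, hτcomm, hℓτ⟩ := hℓ
  refine ⟨⟨hℓhol.1.comp hg.1, hℓhol.2.comp hg.2 hg.1⟩, hτ, hτcomm, fun j z hz => ?_⟩
  simp only [Function.comp_apply]
  rw [← show f j (g z) = g (f j z) from hgf j hz]
  exact hℓτ j (hg.1 hz)

lemma IsSemiModel.eqOn_of_eqOn_comp {q d k : ℕ} {f : Fin k → E q → E q} {ℓ : E q → E d}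
    {τ : Fin k → E d → E d} (hℓ : IsSemiModel q d k f ℓ τ) {Γ₁ Γ₂ : E d → E d}
    (hΓ₁ : MapsTo Γ₁ (B d) (B d)) (hΓ₂ : MapsTo Γ₂ (B d) (B d))
    (hΓℓ : EqOn (Γ₁ ∘ ℓ) (Γ₂ ∘ ℓ) (B q))
    (hΓ₁τ : ∀ j, EqOn (Γ₁ ∘ τ j) (τ j ∘ Γ₁) (B d))
    (hΓ₂τ : ∀ j, EqOn (Γ₂ ∘ τ j) (τ j ∘ Γ₂) (B d)) :
    EqOn Γ₁ Γ₂ (B d) := by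
  obtain ⟨⟨-, hτ, -, -⟩, hunion⟩ := hℓ
  intro y hy
  obtain ⟨N, -, z, hz, hzy⟩ := mem_iUnion.mp (hunion.symm ▸ hy)
  have hτmaps : ∀ j, MapsTo (τ j) (B d) (B d) := fun j => (hτ j).1.1
  refine (iterT_mapsTo_injOn hτmaps (fun j => (hτ j).injOn) N).2 (hΓ₁ hy) (hΓ₂ hy) ?_
  calc iterT τ N (Γ₁ y) = Γ₁ (ℓ z) := by rw [hzy]; exact (iterT_commute hτmaps hΓ₁τ N hy).symm
    _ = Γ₂ (ℓ z) := hΓℓ hz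
    _ = iterT τ N (Γ₂ y) := by rw [hzy]; exact iterT_commute hτmaps hΓ₂τ N hy

theorem exists_unique_Gamma_general (q d k : ℕ) (f : Fin k → E q → E q)
    (h : E q → E d) (φ : Fin k → E d → E d) (hcsm : IsCSM q d k f h φ)
    (g : E q → E q) (hg : HolMap q q g)
    (hgcomm : ∀ j, Set.EqOn (f j ∘ g) (g ∘ f j) (B q)) :
    ∃ Γ : E d → E d,
      (HolMap d d Γ ∧ Set.EqOn (Γ ∘ h) (h ∘ g) (B q) ∧
        ∀ j, Set.EqOn (Γ ∘ φ j) (φ j ∘ Γ) (B d)) ∧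
      ∀ Γ' : E d → E d,
        (HolMap d d Γ' ∧ Set.EqOn (Γ' ∘ h) (h ∘ g) (B q) ∧
          ∀ j, Set.EqOn (Γ' ∘ φ j) (φ j ∘ Γ') (B d)) →
        Set.EqOn Γ' Γ (B d) := by
  obtain ⟨hsemi, hfactor⟩ := hcsm
  obtain ⟨Γ, hΓhol, hΓh, hΓφ⟩ := hfactor d (h ∘ g) φ (hsemi.1.comp_right hg hgcomm)
  refine ⟨Γ, ⟨hΓhol, hΓh, hΓφ⟩, fun Γ' ⟨hΓ'hol, hΓ'h, hΓ'φ⟩ => ?_⟩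
  exact hsemi.eqOn_of_eqOn_comp hΓ'hol.1 hΓhol.1 (hΓ'h.trans hΓh.symm) hΓ'φ hΓφ

/-- if `g` commutes with every `f_j`, there exists a unique holomorphic
self-map `Γ = Γ_F(g)` of the CSM base with `Γ ∘ h = h ∘ g` and `Γ ∘ φ_j = φ_j ∘ Γ`. -/
theorem exists_unique_Gamma (q d k : ℕ) (f : Fin k → E q → E q)
    (hf : ∀ j, HolMap q q (f j)) (hcomm : CommutingOn q k f)
    (h : E q → E d) (φ : Fin k → E d → E d) (hcsm : IsCSM q d k f h φ)
    (g : E q → E q) (hg : HolMap q q g)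
    (hgcomm : ∀ j, Set.EqOn (f j ∘ g) (g ∘ f j) (B q)) :
    ∃ Γ : E d → E d,
      (HolMap d d Γ ∧ Set.EqOn (Γ ∘ h) (h ∘ g) (B q) ∧
        ∀ j, Set.EqOn (Γ ∘ φ j) (φ j ∘ Γ) (B d)) ∧
      ∀ Γ' : E d → E d,
        (HolMap d d Γ' ∧ Set.EqOn (Γ' ∘ h) (h ∘ g) (B q) ∧
          ∀ j, Set.EqOn (Γ' ∘ φ j) (φ j ∘ Γ') (B d)) →
        Set.EqOn Γ' Γ (B d) :=
  exists_unique_Gamma_general q d k f h φ hcsm g hg hgcomm
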